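/- Let p ≥ 2 be an even integer, let S : [0,T] → ℝ have a continuous local time of order p along π (uniform limit L^{S,p,c} of the discrete local times, jointly continuous), and let f ∈ C¹(ℝ,ℝ) be strictly monotone. Then f∘S also has a continuous local time of order p along π, and for every a ∈ ℝ and t ∈ [0,T], L_t^{f(S),p,c}(f(a)) = |f'(a)|^{p-1} · L_t^{S,p,c}(a). -/

import Mathlib

/-! By the mean value theorem, a summand `|f(S t_{j+1}) - f(x)|^{p-1}` of the discrete local time
of `f ∘ S` at `f x` equals `|f'(x)|^{p-1} |S t_{j+1} - x|^{p-1}` up to a relative error bounded by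
the modulus of continuity of `|f'|^{p-1}` at scale `osc(S, π_n)`; hence, uniformly in `x`,
`L^{π_n}(f ∘ S)(f x) - |f'(x)|^{p-1} L^{π_n}(S)(x) → 0`. For decreasing `f` the intervals
`⦇f a, f b⦈` pull back to left-closed intervals; the corresponding sums are right limits in `x`
of the original ones and converge uniformly to the same continuous limit. Finally the limit is
carried to the range of `f` by a continuous inverse of `f` on an interval `[-R, R]` containing the
path, outside of which both local times vanish. -/

open Filter MeasureTheory Set

/-- A nested sequence of partitions `0 = t_0^n < t_1^n < ... < t_{N(n)}^n = T` of `[0, T]`. -/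
structure PartitionSeq (T : ℝ) where
  N : ℕ → ℕ
  pos : ∀ n, 0 < N n
  pt : ℕ → ℕ → ℝ
  pt_zero : ∀ n, pt n 0 = 0
  pt_last : ∀ n, pt n (N n) = T
  pt_mono : ∀ n, ∀ j, j < N n → pt n j < pt n (j + 1)
  nested : ∀ n, ∀ j, j ≤ N n → ∃ j', j' ≤ N (n + 1) ∧ pt (n + 1) j' = pt n j

/-- Oscillation of `S` along the partition `π_n`. -/
noncomputable def oscP {T : ℝ} (S : ℝ → ℝ) (P : PartitionSeq T) (n : ℕ) : ℝ :=
  sSup {y | ∃ j < P.N n, ∃ u ∈ Icc (P.pt n j) (P.pt n (j + 1)),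
    ∃ v ∈ Icc (P.pt n j) (P.pt n (j + 1)), y = |S u - S v|}

/-- Mesh of the partition `π_n`. -/
noncomputable def meshP {T : ℝ} (P : PartitionSeq T) (n : ℕ) : ℝ :=
  sSup {y | ∃ j < P.N n, y = P.pt n (j + 1) - P.pt n j}

/-- Partial sums `Σ_{t_j ≤ t} |S(t_{j+1}) - S(t_j)|^p` of `p`-th variation along `π_n`. -/
noncomputable def pvarSum {T : ℝ} (S : ℝ → ℝ) (P : PartitionSeq T) (p : ℝ) (n : ℕ) (t : ℝ) : ℝ :=
  ∑ j ∈ Finset.range (P.N n),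
    if P.pt n j ≤ t then |S (P.pt n (j + 1)) - S (P.pt n j)| ^ p else 0

/-- Discrete local time of order `p` of `S` along `π_n`:
`L_t^{π_n;p}(x) = Σ_{t_j ≤ t} 1_{⦇S(t_j),S(t_{j+1})⦈}(x) |S(t_{j+1}) - x|^{p-1}`. -/
noncomputable def discLT {T : ℝ} (S : ℝ → ℝ) (P : PartitionSeq T) (p : ℕ) (n : ℕ)
    (t x : ℝ) : ℝ :=
  ∑ j ∈ Finset.range (P.N n),
    if P.pt n j ≤ t then
      Set.indicator (Set.uIoc (S (P.pt n j)) (S (P.pt n (j + 1))))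
        (fun _ => |S (P.pt n (j + 1)) - x| ^ (p - 1)) x
    else 0

/-- `S` has a continuous local time `L` of order `p` along `P`: the oscillations tend to `0`,
the discrete local times converge uniformly in `x` for each `t ∈ [0,T]`, and the limit is
jointly continuous. -/
def HasCLT {T : ℝ} (P : PartitionSeq T) (p : ℕ) (S : ℝ → ℝ) (L : ℝ → ℝ → ℝ) : Prop :=
  Tendsto (oscP S P) atTop (nhds 0) ∧
  (∀ t ∈ Icc (0 : ℝ) T, TendstoUniformly (fun n x => discLT S P p n t x) (fun x => L t x) atTop) ∧
  Continuous (fun q : ℝ × ℝ => L q.1 q.2)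

/-- `S ∈ V_p(π)` with `p`-th variation function `V`. -/
def HasPVar {T : ℝ} (P : PartitionSeq T) (p : ℝ) (S : ℝ → ℝ) (V : ℝ → ℝ) : Prop :=
  Tendsto (oscP S P) atTop (nhds 0) ∧
  ContinuousOn V (Icc 0 T) ∧ MonotoneOn V (Icc 0 T) ∧
  ∀ t ∈ Icc (0 : ℝ) T, Tendsto (fun n => pvarSum S P p n t) atTop (nhds (V t))

open scoped Interval Topology
open Function

namespace PartitionSeq

variable {T : ℝ} (P : PartitionSeq T)

lemma pt_le_pt {n j k : ℕ} (hjk : j ≤ k) (hk : k ≤ P.N n) : P.pt n j ≤ P.pt n k := by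
  induction k, hjk using Nat.le_induction with
  | base => exact le_rfl
  | succ k _ ih => exact (ih (by omega)).trans (P.pt_mono n k (by omega)).le

lemma pt_mem_Icc {n j : ℕ} (hj : j ≤ P.N n) : P.pt n j ∈ Icc 0 T :=
  ⟨by simpa only [P.pt_zero] using P.pt_le_pt (Nat.zero_le j) hj,
    by simpa only [P.pt_last] using P.pt_le_pt hj le_rfl⟩

lemma Icc_pt_subset {n j : ℕ} (hj : j < P.N n) :
    Icc (P.pt n j) (P.pt n (j + 1)) ⊆ Icc 0 T :=
  Icc_subset_Icc (P.pt_mem_Icc hj.le).1 (P.pt_mem_Icc hj).2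

end PartitionSeq

def Set.uIco {α : Type*} [LinearOrder α] (a b : α) : Set α := Ico (min a b) (max a b)

section Preimage

variable {α β : Type*} [LinearOrder α] [LinearOrder β] {f : α → β}

lemma StrictMono.preimage_uIoc (hf : StrictMono f) (a b : α) :
    f ⁻¹' Ι (f a) (f b) = Ι a b := by
  ext x
  simp only [mem_preimage, uIoc, mem_Ioc, ← hf.monotone.map_min, ← hf.monotone.map_max,
    hf.lt_iff_lt, hf.le_iff_le]

lemma StrictAnti.preimage_uIoc (hf : StrictAnti f) (a b : α) :
    f ⁻¹' Ι (f a) (f b) = uIco a b := by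
  ext x
  simp only [mem_preimage, uIoc, uIco, mem_Ioc, mem_Ico, ← hf.antitone.map_min,
    ← hf.antitone.map_max, hf.lt_iff_gt, hf.le_iff_ge, and_comm]

end Preimage

/-- `g` inverts `f` on `f '' [[a, b]] = [[f a, f b]]` after clamping onto that interval, which is
why it sends the complement to the endpoints. -/
lemma exists_continuous_leftInvOn_uIcc {f : ℝ → ℝ} (hf : Continuous f)
    (hmono : StrictMono f ∨ StrictAnti f) (a b : ℝ) :
    ∃ g : ℝ → ℝ, Continuous g ∧ (∀ x ∈ [[a, b]], g (f x) = x) ∧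
      ∀ y ∉ f '' [[a, b]], g y = a ∨ g y = b := by
  have hinj : Injective f := hmono.elim StrictMono.injective StrictAnti.injective
  have himage : f '' [[a, b]] = [[f a, f b]] := by
    rcases hmono with h | h
    · exact hf.continuousOn.image_uIcc_of_monotoneOn (h.monotone.monotoneOn _)
    · exact hf.continuousOn.image_uIcc_of_antitoneOn (h.antitone.antitoneOn _)
  have : CompactSpace [[a, b]] := isCompact_iff_compactSpace.1 isCompact_uIcc
  let e : [[a, b]] ≃ₜ f '' [[a, b]] :=
    Continuous.homeoOfEquivCompactToT2 (f := Equiv.Set.image f _ hinj)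
      ((hf.comp continuous_subtype_val).subtype_mk _)
  let clamp : ℝ → f '' [[a, b]] := fun y =>
    ⟨projIcc (f a ⊓ f b) (f a ⊔ f b) inf_le_sup y,
      by rw [himage]; exact (projIcc _ _ inf_le_sup y).2⟩
  have hclamp : Continuous clamp := (continuous_subtype_val.comp continuous_projIcc).subtype_mk _
  have hfg : ∀ y, f (e.symm (clamp y)) = projIcc (f a ⊓ f b) (f a ⊔ f b) inf_le_sup y :=
    fun y => congrArg Subtype.val (e.apply_symm_apply (clamp y))
  refine ⟨fun y => e.symm (clamp y), continuous_subtype_val.comp (e.symm.continuous.comp hclamp),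
    fun x hx => hinj ?_, fun y hy => ?_⟩
  · rw [hfg, projIcc_of_mem _ (show f x ∈ [[f a, f b]] from himage ▸ mem_image_of_mem f hx)]
  · rw [himage, uIcc, mem_Icc, not_and_or, not_le, not_le] at hy
    have hend : f (e.symm (clamp y)) = f a ∨ f (e.symm (clamp y)) = f b := by
      rw [hfg]
      rcases hy with hy | hy
      · rw [projIcc_of_le_left _ hy.le]; exact min_choice _ _
      · rw [projIcc_of_right_le _ hy.le]; exact max_choice _ _
    exact hend.imp (fun h => hinj h) (fun h => hinj h)

section Oscillation

variable {T : ℝ} {P : PartitionSeq T} {S : ℝ → ℝ} {a b : ℝ}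

lemma oscP_nonneg (n : ℕ) : 0 ≤ oscP S P n :=
  Real.sSup_nonneg (by rintro _ ⟨_, _, _, _, _, _, rfl⟩; exact abs_nonneg _)

lemma oscP_le {n : ℕ} {ε : ℝ} (hε : 0 ≤ ε)
    (h : ∀ j < P.N n, ∀ u ∈ Icc (P.pt n j) (P.pt n (j + 1)),
      ∀ v ∈ Icc (P.pt n j) (P.pt n (j + 1)), |S u - S v| ≤ ε) :
    oscP S P n ≤ ε :=
  Real.sSup_le (by rintro _ ⟨j, hj, u, hu, v, hv, rfl⟩; exact h j hj u hu v hv) hε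

lemma abs_sub_le_oscP (hS : ∀ u ∈ Icc 0 T, S u ∈ [[a, b]]) {n j : ℕ} (hj : j < P.N n)
    {u v : ℝ} (hu : u ∈ Icc (P.pt n j) (P.pt n (j + 1)))
    (hv : v ∈ Icc (P.pt n j) (P.pt n (j + 1))) :
    |S u - S v| ≤ oscP S P n := by
  refine le_csSup ⟨|b - a|, ?_⟩ ⟨j, hj, u, hu, v, hv, rfl⟩
  rintro _ ⟨i, hi, u', hu', v', hv', rfl⟩
  exact abs_sub_le_of_uIcc_subset_uIcc
    (uIcc_subset_uIcc (hS v' (P.Icc_pt_subset hi hv')) (hS u' (P.Icc_pt_subset hi hu')))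

lemma abs_sub_pt_le_oscP (hS : ∀ u ∈ Icc 0 T, S u ∈ [[a, b]]) {n j : ℕ} (hj : j < P.N n) :
    |S (P.pt n (j + 1)) - S (P.pt n j)| ≤ oscP S P n :=
  abs_sub_le_oscP hS hj (right_mem_Icc.2 (P.pt_mono n j hj).le)
    (left_mem_Icc.2 (P.pt_mono n j hj).le)

lemma tendsto_oscP_comp {f : ℝ → ℝ} (hS : ∀ u ∈ Icc 0 T, S u ∈ [[a, b]])
    (hf : ContinuousOn f [[a, b]]) (hosc : Tendsto (oscP S P) atTop (𝓝 0)) :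
    Tendsto (oscP (f ∘ S) P) atTop (𝓝 0) := by
  refine tendsto_order.2 ⟨fun c hc => .of_forall fun n => hc.trans_le (oscP_nonneg n),
    fun ε hε => ?_⟩
  obtain ⟨δ, hδ, hfδ⟩ := Metric.uniformContinuousOn_iff_le.1
    (isCompact_uIcc.uniformContinuousOn_of_continuous hf) (ε / 2) (half_pos hε)
  filter_upwards [hosc.eventually_lt_const hδ] with n hn
  refine (oscP_le (half_pos hε).le fun j hj u hu v hv => ?_).trans_lt (half_lt_self hε)
  exact hfδ _ (hS u (P.Icc_pt_subset hj hu)) _ (hS v (P.Icc_pt_subset hj hv))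
    ((abs_sub_le_oscP hS hj hu hv).trans hn.le)

end Oscillation

/-- `discLT` with the intervals `⦇S(t_j), S(t_{j+1})⦈` replaced by `I (S t_j) (S t_{j+1})` and
the distances measured after applying `f`: `discLT S = discLTWith uIoc id S`, and
`discLT (f ∘ S)` at `f x` is `discLTWith I f S` at `x` for `I a b = f ⁻¹' ⦇f a, f b⦈`. -/
noncomputable def discLTWith {T : ℝ} (I : ℝ → ℝ → Set ℝ) (f S : ℝ → ℝ) (P : PartitionSeq T)
    (q n : ℕ) (t x : ℝ) : ℝ :=
  ∑ j ∈ Finset.range (P.N n),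
    if P.pt n j ≤ t then
      (I (S (P.pt n j)) (S (P.pt n (j + 1)))).indicator
        (fun y => |f (S (P.pt n (j + 1))) - f y| ^ q) x
    else 0

section DiscreteLocalTime

variable {T : ℝ} {P : PartitionSeq T} {S f : ℝ → ℝ} {p : ℕ}

lemma discLT_comp_apply {I : ℝ → ℝ → Set ℝ} (hI : ∀ a b, f ⁻¹' Ι (f a) (f b) = I a b)
    (n : ℕ) (t x : ℝ) :
    discLT (f ∘ S) P p n t (f x) = discLTWith I f S P (p - 1) n t x := by
  simp only [discLT, discLTWith, ← hI, Function.comp_apply]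
  refine Finset.sum_congr rfl fun j _ => ?_
  by_cases h : f x ∈ Ι (f (S (P.pt n j))) (f (S (P.pt n (j + 1)))) <;> simp [h]

lemma discLT_eq_zero_of_notMem {s : Set ℝ} (hs : s.OrdConnected)
    (hS : ∀ u ∈ Icc 0 T, S u ∈ s) {x : ℝ} (hx : x ∉ s) (n : ℕ) (t : ℝ) :
    discLT S P p n t x = 0 := by
  refine Finset.sum_eq_zero fun j hj => ?_
  have hj := Finset.mem_range.1 hj
  have hx' : x ∉ Ι (S (P.pt n j)) (S (P.pt n (j + 1))) := fun h => hx <|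
    hs.uIcc_subset (hS _ (P.pt_mem_Icc hj.le)) (hS _ (P.pt_mem_Icc hj)) (uIoc_subset_uIcc h)
  simp [indicator_of_notMem hx']

lemma HasCLT.apply_eq_zero_of_notMem {L : ℝ → ℝ → ℝ} (hL : HasCLT P p S L) {s : Set ℝ}
    (hs : s.OrdConnected) (hS : ∀ u ∈ Icc 0 T, S u ∈ s) {t x : ℝ} (ht : t ∈ Icc 0 T)
    (hx : x ∉ s) : L t x = 0 :=
  tendsto_nhds_unique ((hL.2.1 t ht).tendsto_at x) <| by
    simp only [discLT_eq_zero_of_notMem hs hS hx]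
    exact tendsto_const_nhds

end DiscreteLocalTime

lemma tendsto_indicator_Ioc_nhdsGT {β : Type*} [TopologicalSpace β] [Zero β] {a b x : ℝ}
    {h : ℝ → β} (hh : ContinuousAt h x) :
    Tendsto ((Ioc a b).indicator h) (𝓝[>] x) (𝓝 ((Ico a b).indicator h x)) := by
  by_cases hx : x ∈ Ico a b
  · rw [indicator_of_mem hx]
    refine (hh.mono_left nhdsWithin_le_nhds).congr' ?_
    filter_upwards [Ioo_mem_nhdsGT hx.2] with y hy
    exact (indicator_of_mem (show y ∈ Ioc a b from ⟨hx.1.trans_lt hy.1, hy.2.le⟩) h).symm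
  · rw [indicator_of_notMem hx]
    refine tendsto_const_nhds.congr' ?_
    rcases lt_or_ge x a with hxa | hax
    · filter_upwards [Ioo_mem_nhdsGT hxa] with y hy
      exact (indicator_of_notMem (fun h' => hy.2.not_ge h'.1.le) h).symm
    · have hbx : b ≤ x := not_lt.1 fun hxb => hx ⟨hax, hxb⟩
      filter_upwards [self_mem_nhdsWithin] with y hy
      exact (indicator_of_notMem (fun h' => (hbx.trans_lt hy).not_ge h'.2) h).symm

lemma tendsto_discLTWith_uIoc_nhdsGT {T : ℝ} (S : ℝ → ℝ) (P : PartitionSeq T) (q n : ℕ)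
    (t x : ℝ) :
    Tendsto (discLTWith uIoc id S P q n t) (𝓝[>] x) (𝓝 (discLTWith uIco id S P q n t x)) := by
  refine tendsto_finsetSum _ fun j _ => ?_
  split_ifs
  · exact tendsto_indicator_Ioc_nhdsGT
      ((continuous_const.sub continuous_id).abs.pow q).continuousAt
  · exact tendsto_const_nhds

lemma TendstoUniformly.of_tendsto_nhdsGT {ι β : Type*} [PseudoMetricSpace β] {l : Filter ι}
    {F G : ι → ℝ → β} {Λ : ℝ → β} (hF : TendstoUniformly F Λ l) (hΛ : Continuous Λ)
    (hG : ∀ i x, Tendsto (F i) (𝓝[>] x) (𝓝 (G i x))) :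
    TendstoUniformly G Λ l := by
  rw [Metric.tendstoUniformly_iff] at hF ⊢
  intro ε hε
  filter_upwards [hF (ε / 2) (half_pos hε)] with i hi x
  have : dist (Λ x) (G i x) ≤ ε / 2 :=
    le_of_tendsto (((hΛ.tendsto x).mono_left nhdsWithin_le_nhds).dist (hG i x))
      (.of_forall fun y => (hi y).le)
  linarith

lemma HasCLT.continuous_apply {T : ℝ} {P : PartitionSeq T} {p : ℕ} {S : ℝ → ℝ}
    {L : ℝ → ℝ → ℝ} (hL : HasCLT P p S L) (t : ℝ) : Continuous (L t) :=
  hL.2.2.comp (Continuous.prodMk_right t)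

/-- The left-closed sums are right limits in `x` of the left-open ones, so they have the same
uniform limit. -/
lemma HasCLT.tendstoUniformly_discLTWith_uIco {T : ℝ} {P : PartitionSeq T} {p : ℕ}
    {S : ℝ → ℝ} {L : ℝ → ℝ → ℝ} (hL : HasCLT P p S L) {t : ℝ} (ht : t ∈ Icc 0 T) :
    TendstoUniformly (discLTWith uIco id S P (p - 1) · t) (L t) atTop :=
  (hL.2.1 t ht).of_tendsto_nhdsGT (hL.continuous_apply t)
    fun n x => tendsto_discLTWith_uIoc_nhdsGT S P (p - 1) n t x

lemma exists_mem_uIcc_sub_eq_deriv_mul {f : ℝ → ℝ} (hf : Differentiable ℝ f) (x y : ℝ) :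
    ∃ ξ ∈ [[x, y]], f y - f x = deriv f ξ * (y - x) := by
  wlog hxy : x < y generalizing x y
  · rcases (not_lt.1 hxy).eq_or_lt with rfl | hyx
    · exact ⟨y, left_mem_uIcc, by ring⟩
    · obtain ⟨ξ, hξ, h⟩ := this y x hyx
      exact ⟨ξ, uIcc_comm x y ▸ hξ, by linear_combination -h⟩
  obtain ⟨ξ, hξ, h⟩ := exists_deriv_eq_slope f hxy hf.continuous.continuousOn
    hf.differentiableOn
  exact ⟨ξ, Icc_subset_uIcc (Ioo_subset_Icc_self hξ),
    by rw [h, div_mul_cancel₀ _ (sub_ne_zero.2 hxy.ne')]⟩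

lemma abs_abs_sub_pow_sub_deriv_le {f : ℝ → ℝ} (hf : Differentiable ℝ f) (q : ℕ) {x y ε : ℝ}
    (hε : ∀ ξ ∈ [[x, y]], |(|deriv f ξ| ^ q - |deriv f x| ^ q)| ≤ ε) :
    |(|f y - f x| ^ q - |deriv f x| ^ q * |y - x| ^ q)| ≤ ε * |y - x| ^ q := by
  obtain ⟨ξ, hξ, h⟩ := exists_mem_uIcc_sub_eq_deriv_mul hf x y
  rw [h, abs_mul, mul_pow, ← sub_mul, abs_mul, abs_of_nonneg (by positivity : 0 ≤ |y - x| ^ q)]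
  exact mul_le_mul_of_nonneg_right (hε ξ hξ) (by positivity)

section Comparison

variable {T : ℝ} {P : PartitionSeq T} {I : ℝ → ℝ → Set ℝ} {f S : ℝ → ℝ} {q : ℕ}

lemma abs_discLTWith_sub_le (hf : Differentiable ℝ f) {n : ℕ} {t x ε : ℝ}
    (hε : ∀ j < P.N n, x ∈ I (S (P.pt n j)) (S (P.pt n (j + 1))) →
      ∀ ξ ∈ [[x, S (P.pt n (j + 1))]], |(|deriv f ξ| ^ q - |deriv f x| ^ q)| ≤ ε) :
    |discLTWith I f S P q n t x - |deriv f x| ^ q * discLTWith I id S P q n t x| ≤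
      ε * discLTWith I id S P q n t x := by
  simp only [discLTWith, Finset.mul_sum, ← Finset.sum_sub_distrib]
  refine (Finset.abs_sum_le_sum_abs _ _).trans (Finset.sum_le_sum fun j hj => ?_)
  split_ifs
  · by_cases hx : x ∈ I (S (P.pt n j)) (S (P.pt n (j + 1)))
    · simp only [indicator_of_mem hx, id]
      exact abs_abs_sub_pow_sub_deriv_le hf q (hε j (Finset.mem_range.1 hj) hx)
    · simp [indicator_of_notMem hx]
  · simp

lemma eventually_abs_discLTWith_sub_le (hI : ∀ a b, I a b ⊆ [[a, b]]) (hf : ContDiff ℝ 1 f)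
    {a b : ℝ} (hS : ∀ u ∈ Icc 0 T, S u ∈ [[a, b]]) (hosc : Tendsto (oscP S P) atTop (𝓝 0))
    (t : ℝ) {ε : ℝ} (hε : 0 < ε) :
    ∀ᶠ n in atTop, ∀ x ∈ [[a, b]], |discLTWith I f S P q n t x -
      |deriv f x| ^ q * discLTWith I id S P q n t x| ≤ ε * |discLTWith I id S P q n t x| := by
  obtain ⟨δ, hδ, hφδ⟩ := Metric.uniformContinuousOn_iff_le.1
    (isCompact_uIcc.uniformContinuousOn_of_continuous
      ((hf.continuous_deriv le_rfl).abs.pow q).continuousOn) ε hε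
  filter_upwards [hosc.eventually_lt_const hδ] with n hn x hx
  refine (abs_discLTWith_sub_le (hf.differentiable one_ne_zero) fun j hj hxj ξ hξ => ?_).trans
    (mul_le_mul_of_nonneg_left (le_abs_self _) hε.le)
  -- `x` and `ξ` lie in `[[S t_j, S t_{j+1}]]`, whose length is at most one oscillation
  have hcell : [[S (P.pt n j), S (P.pt n (j + 1))]] ⊆ [[a, b]] :=
    ordConnected_uIcc.uIcc_subset (hS _ (P.pt_mem_Icc hj.le)) (hS _ (P.pt_mem_Icc hj))
  have hx' := hI _ _ hxj
  have hξ' := uIcc_subset_uIcc hx' right_mem_uIcc hξ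
  rw [abs_sub_comm]
  refine hφδ x hx ξ (hcell hξ') ?_
  calc dist x ξ ≤ |S (P.pt n (j + 1)) - S (P.pt n j)| :=
        abs_sub_le_of_uIcc_subset_uIcc (uIcc_subset_uIcc hξ' hx')
    _ ≤ δ := (abs_sub_pt_le_oscP hS hj).trans hn.le

end Comparison

lemma TendstoUniformlyOn.of_abs_sub_mul_le {α ι : Type*} {l : Filter ι} {s : Set α}
    {G H : ι → α → ℝ} {φ Λ : α → ℝ} {C K : ℝ} (hH : TendstoUniformlyOn H Λ l s)
    (hΛ : ∀ x ∈ s, |Λ x| ≤ C) (hφ : ∀ x ∈ s, |φ x| ≤ K)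
    (hG : ∀ ε > 0, ∀ᶠ i in l, ∀ x ∈ s, |G i x - φ x * H i x| ≤ ε * |H i x|) :
    TendstoUniformlyOn G (fun x => φ x * Λ x) l s := by
  rw [Metric.tendstoUniformlyOn_iff] at hH ⊢
  intro ε hε
  set η := min 1 (ε / 4 / (|K| + 1))
  set ε₁ := ε / 4 / (|C| + 1)
  filter_upwards [hH η (by positivity), hG ε₁ (by positivity)] with i hHi hGi x hx
  have hΛH : |Λ x - H i x| ≤ η := (hHi x hx).le
  have hH : |H i x| ≤ |C| + 1 := by
    have := abs_sub_abs_le_abs_sub (H i x) (Λ x)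
    rw [abs_sub_comm] at this
    linarith [(hΛ x hx).trans (le_abs_self C), min_le_left 1 (ε / 4 / (|K| + 1))]
  have h₁ : |φ x| * |Λ x - H i x| ≤ ε / 4 :=
    calc |φ x| * |Λ x - H i x| ≤ (|K| + 1) * (ε / 4 / (|K| + 1)) := by
          gcongr
          · linarith [(hφ x hx).trans (le_abs_self K)]
          · exact hΛH.trans (min_le_right _ _)
      _ = ε / 4 := mul_div_cancel₀ _ (by positivity)
  have h₂ : |G i x - φ x * H i x| ≤ ε / 4 :=
    calc |G i x - φ x * H i x| ≤ ε₁ * (|C| + 1) := (hGi x hx).trans (by gcongr)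
      _ = ε / 4 := div_mul_cancel₀ _ (by positivity)
  calc dist (φ x * Λ x) (G i x)
      = |φ x * (Λ x - H i x) - (G i x - φ x * H i x)| := by rw [Real.dist_eq]; ring_nf
    _ ≤ |φ x| * |Λ x - H i x| + |G i x - φ x * H i x| := by rw [← abs_mul]; exact abs_sub _ _
    _ < ε := by linarith

lemma tendstoUniformly_of_tendstoUniformlyOn_image {α β ι : Type*} [PseudoMetricSpace β]
    {l : Filter ι} {f : α → α} {s : Set α} {F G : ι → α → β} {Λ Φ : α → β}
    (hG : TendstoUniformlyOn G Φ l s) (hFG : ∀ i, ∀ x ∈ s, F i (f x) = G i x)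
    (hΛΦ : ∀ x ∈ s, Λ (f x) = Φ x) (hout : ∀ y ∉ f '' s, ∀ i, F i y = Λ y) :
    TendstoUniformly F Λ l := by
  rw [Metric.tendstoUniformlyOn_iff] at hG
  rw [Metric.tendstoUniformly_iff]
  intro ε hε
  filter_upwards [hG ε hε] with i hi y
  by_cases hy : y ∈ f '' s
  · obtain ⟨x, hx, rfl⟩ := hy
    rw [hFG i x hx, hΛΦ x hx]
    exact hi x hx
  · rwa [hout y hy i, dist_self]

section Composition

variable {T : ℝ} {P : PartitionSeq T} {p : ℕ} {S f : ℝ → ℝ} {a b : ℝ}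

lemma tendstoUniformlyOn_discLTWith {I : ℝ → ℝ → Set ℝ} (hI : ∀ a b, I a b ⊆ [[a, b]])
    (hf : ContDiff ℝ 1 f) (hS : ∀ u ∈ Icc 0 T, S u ∈ [[a, b]])
    (hosc : Tendsto (oscP S P) atTop (𝓝 0)) {q : ℕ} {t : ℝ} {Λ : ℝ → ℝ} (hΛ : Continuous Λ)
    (hconv : TendstoUniformlyOn (discLTWith I id S P q · t) Λ atTop [[a, b]]) :
    TendstoUniformlyOn (discLTWith I f S P q · t) (fun x => |deriv f x| ^ q * Λ x)
      atTop [[a, b]] := by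
  obtain ⟨C, hC⟩ := isCompact_uIcc.exists_bound_of_continuousOn hΛ.continuousOn
  obtain ⟨K, hK⟩ := isCompact_uIcc.exists_bound_of_continuousOn
    ((hf.continuous_deriv le_rfl).abs.pow q).continuousOn
  exact hconv.of_abs_sub_mul_le (C := C) (K := K) hC hK fun ε hε =>
    eventually_abs_discLTWith_sub_le hI hf hS hosc t hε

theorem HasCLT.tendstoUniformlyOn_discLT_comp {L : ℝ → ℝ → ℝ} (hL : HasCLT P p S L)
    (hf : ContDiff ℝ 1 f) (hmono : StrictMono f ∨ StrictAnti f)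
    (hS : ∀ u ∈ Icc 0 T, S u ∈ [[a, b]]) {t : ℝ} (ht : t ∈ Icc 0 T) :
    TendstoUniformlyOn (fun n x => discLT (f ∘ S) P p n t (f x))
      (fun x => |deriv f x| ^ (p - 1) * L t x) atTop [[a, b]] := by
  obtain ⟨I, hI, hpre, hconv⟩ : ∃ I : ℝ → ℝ → Set ℝ, (∀ a b, I a b ⊆ [[a, b]]) ∧
      (∀ a b, f ⁻¹' Ι (f a) (f b) = I a b) ∧
      TendstoUniformly (discLTWith I id S P (p - 1) · t) (L t) atTop := by
    rcases hmono with hf' | hf'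
    · exact ⟨uIoc, fun _ _ => uIoc_subset_uIcc, hf'.preimage_uIoc, hL.2.1 t ht⟩
    · exact ⟨uIco, fun _ _ => Ico_subset_Icc_self, hf'.preimage_uIoc,
        hL.tendstoUniformly_discLTWith_uIco ht⟩
  simp only [discLT_comp_apply hpre]
  exact tendstoUniformlyOn_discLTWith hI hf hS hL.1 (hL.continuous_apply t)
    hconv.tendstoUniformlyOn

end Composition

theorem local_time_of_function_of_path_general {T : ℝ} (P : PartitionSeq T)
    (p : ℕ) (S : ℝ → ℝ) (hS : ContinuousOn S (Icc 0 T))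
    (L : ℝ → ℝ → ℝ) (hL : HasCLT P p S L)
    (f : ℝ → ℝ) (hf : ContDiff ℝ 1 f) (hmono : StrictMono f ∨ StrictAnti f) :
    ∃ L' : ℝ → ℝ → ℝ, HasCLT P p (f ∘ S) L' ∧
      ∀ t ∈ Icc (0 : ℝ) T, ∀ a : ℝ, L' t (f a) = |deriv f a| ^ (p - 1) * L t a := by
  obtain ⟨R, hR⟩ : ∃ R, ∀ u ∈ Icc 0 T, S u ∈ Ioo (-R) R := by
    obtain ⟨C, hC⟩ := isCompact_Icc.exists_bound_of_continuousOn hS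
    exact ⟨C + 1, fun u hu => abs_lt.1 ((hC u hu).trans_lt (lt_add_one C))⟩
  have hRR : ∀ u ∈ Icc 0 T, S u ∈ [[-R, R]] := fun u hu =>
    Icc_subset_uIcc (Ioo_subset_Icc_self (hR u hu))
  have hL0 : ∀ t ∈ Icc 0 T, ∀ x ∉ Ioo (-R) R, L t x = 0 := fun t ht x hx =>
    hL.apply_eq_zero_of_notMem ordConnected_Ioo hR ht hx
  obtain ⟨g, hg, hgf, hg_out⟩ := exists_continuous_leftInvOn_uIcc hf.continuous hmono (-R) R
  have hLg : ∀ t ∈ Icc 0 T, ∀ y ∉ f '' [[-R, R]], L t (g y) = 0 := fun t ht y hy =>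
    hL0 t ht _ (by rcases hg_out y hy with h | h <;> simp [h])
  refine ⟨fun t y => |deriv f (g y)| ^ (p - 1) * L t (g y),
    ⟨tendsto_oscP_comp hRR hf.continuous.continuousOn hL.1, fun t ht => ?_, ?_⟩, fun t ht a => ?_⟩
  · refine tendstoUniformly_of_tendstoUniformlyOn_image
      (hL.tendstoUniformlyOn_discLT_comp hf hmono hRR ht) (fun _ _ _ => rfl)
      (fun x hx => by simp only [hgf x hx]) fun y hy n => ?_
    dsimp only
    rw [discLT_eq_zero_of_notMem (S := f ∘ S)
      (isPreconnected_uIcc.image f hf.continuous.continuousOn).ordConnected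
      (fun u hu => mem_image_of_mem f (hRR u hu)) hy, hLg t ht y hy, mul_zero]
  · exact ((hf.continuous_deriv le_rfl).comp (hg.comp continuous_snd)).abs.pow _ |>.mul
      (hL.2.2.comp (continuous_fst.prodMk (hg.comp continuous_snd)))
  · by_cases ha : a ∈ [[-R, R]]
    · simp only [hgf a ha]
    · have hinj : Injective f := hmono.elim StrictMono.injective StrictAnti.injective
      dsimp only
      rw [hLg t ht _ (hinj.mem_set_image.not.2 ha),
        hL0 t ht a fun h => ha (Icc_subset_uIcc (Ioo_subset_Icc_self h)), mul_zero, mul_zero]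

/-- Proposition 2: if `S` has a continuous local time of order `p` along `π` and
`f ∈ C¹(ℝ)` is strictly monotone, then `f ∘ S` also has a continuous local time of order `p`
along `π`, and `L_t^{f(S),p,c}(f(a)) = |f'(a)|^{p-1} L_t^{S,p,c}(a)`. -/
theorem local_time_of_function_of_path {T : ℝ} (hT : 0 < T) (P : PartitionSeq T)
    (p : ℕ) (hp : Even p) (hp2 : 2 ≤ p)
    (S : ℝ → ℝ) (hS : ContinuousOn S (Icc 0 T))
    (L : ℝ → ℝ → ℝ) (hL : HasCLT P p S L)
    (f : ℝ → ℝ) (hf : ContDiff ℝ 1 f) (hmono : StrictMono f ∨ StrictAnti f) :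
    ∃ L' : ℝ → ℝ → ℝ, HasCLT P p (f ∘ S) L' ∧
      ∀ t ∈ Icc (0 : ℝ) T, ∀ a : ℝ, L' t (f a) = |deriv f a| ^ (p - 1) * L t a :=
  local_time_of_function_of_path_general P p S hS L hL f hf hmono
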